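/- arXiv:2402.13824 — 2 statements merged into one kernel-verified Lean document; each statement's English description precedes it below -/
import Mathlib

section
/- There exists a principal-multi-agent instance in which the supremum Opt_R of the principal's utility over incentive-compatible randomized contracts is not attained: every incentive-compatible randomized contract has principal utility strictly less than Opt_R. In the witnessing instance, Opt_R = 3/4, for every ε ∈ (0,1] there is an IC randomized contract with principal utility at least 3/4 − ε, and every IC randomized contract has principal utility at most 1/2 or strictly below 3/4. -/
open scoped Classical BigOperators

/-- A principal-multi-agent instance. -/
structure PMA where
  n : ℕ
  npos : 0 < n
  Out : Type
  [fOut : Fintype Out]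
  r : Out → ℝ
  r_nonneg : ∀ ω, 0 ≤ r ω
  r_le_one : ∀ ω, r ω ≤ 1
  A : Fin n → Type
  [fA : ∀ i, Fintype (A i)]
  [neA : ∀ i, Nonempty (A i)]
  c : ∀ i : Fin n, A i → ℝ
  c_nonneg : ∀ i a, 0 ≤ c i a
  c_le_one : ∀ i a, c i a ≤ 1
  c_zero : ∀ i, ∃ a, c i a = 0
  F : (∀ i, A i) → Out → ℝ
  F_nonneg : ∀ a ω, 0 ≤ F a ω
  F_sum_one : ∀ a, ∑ ω, F a ω = 1

attribute [instance] PMA.fOut PMA.fA PMA.neA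

namespace PMA

variable (I : PMA)

/-- Joint action profiles. -/
abbrev Profile := ∀ i, I.A i

/-- Total cost of a joint action profile. -/
noncomputable def cost (a : I.Profile) : ℝ := ∑ i, I.c i (a i)

/-- A deterministic contract `(a, p)` is incentive compatible (with nonnegative payments). -/
def DetIC (a : I.Profile) (p : Fin I.n → I.Out → ℝ) : Prop :=
  (∀ i ω, 0 ≤ p i ω) ∧
  ∀ (i : Fin I.n) (ai' : I.A i),
    (∑ ω, I.F a ω * p i ω) - I.c i (a i) ≥
      (∑ ω, I.F (Function.update a i ai') ω * p i ω) - I.c i ai'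

/-- Principal utility of a deterministic contract. -/
noncomputable def detUtil (a : I.Profile) (p : Fin I.n → I.Out → ℝ) : ℝ :=
  ∑ ω, I.F a ω * (I.r ω - ∑ i, p i ω)

/-- Optimal principal utility over IC deterministic contracts. -/
noncomputable def OptD : ℝ := sSup {u | ∃ a p, I.DetIC a p ∧ u = I.detUtil a p}

/-- `μ` is a probability distribution over action profiles. -/
def IsDistrib (μ : I.Profile → ℝ) : Prop := (∀ a, 0 ≤ μ a) ∧ ∑ a, μ a = 1

/-- `(μ, π)` is an incentive-compatible randomized contract. -/
def RandIC (μ : I.Profile → ℝ) (π : Fin I.n → I.Profile → I.Out → ℝ) : Prop :=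
  I.IsDistrib μ ∧ (∀ i a ω, 0 ≤ π i a ω) ∧
  ∀ (i : Fin I.n) (ai ai' : I.A i),
    (∑ a : I.Profile, if a i = ai then
        μ a * ((∑ ω, π i a ω * I.F a ω) - I.c i ai) else 0) ≥
      (∑ a : I.Profile, if a i = ai then
        μ a * ((∑ ω, π i a ω * I.F (Function.update a i ai') ω) - I.c i ai') else 0)

/-- Principal utility of a randomized contract. -/
noncomputable def randUtil (μ : I.Profile → ℝ) (π : Fin I.n → I.Profile → I.Out → ℝ) : ℝ :=
  ∑ a : I.Profile, ∑ ω, μ a * I.F a ω * (I.r ω - ∑ i, π i a ω)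

/-- Supremum of the principal's utility over IC randomized contracts. -/
noncomputable def OptR : ℝ := sSup {u | ∃ μ π, I.RandIC μ π ∧ u = I.randUtil μ π}

/-- The inducible action profiles. -/
def AindR : Set I.Profile := {a | ∃ μ π, I.RandIC μ π ∧ 0 < μ a}

/-- The LP incentive constraints. -/
def LPICc (μ : I.Profile → ℝ) (x : Fin I.n → I.Profile → I.Out → ℝ) : Prop :=
  ∀ (i : Fin I.n) (ai ai' : I.A i),
    (∑ a : I.Profile, if a i = ai then
        (∑ ω, x i a ω * I.F a ω) - μ a * I.c i ai else 0) ≥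
      (∑ a : I.Profile, if a i = ai then
        (∑ ω, x i a ω * I.F (Function.update a i ai') ω) - μ a * I.c i ai' else 0)

/-- Feasibility for `LP(∞, A')`. -/
def LPFeasInf (A' : Set I.Profile) (μ : I.Profile → ℝ)
    (x : Fin I.n → I.Profile → I.Out → ℝ) : Prop :=
  I.IsDistrib μ ∧ (∀ i a ω, 0 ≤ x i a ω) ∧ I.LPICc μ x ∧
    ∀ a ∉ A', μ a = 0 ∧ ∀ i ω, x i a ω = 0

/-- Feasibility for `LP(M, A')` with finite `M`. -/
def LPFeas (M : ℝ) (A' : Set I.Profile) (μ : I.Profile → ℝ)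
    (x : Fin I.n → I.Profile → I.Out → ℝ) : Prop :=
  I.LPFeasInf A' μ x ∧ ∀ i a ω, x i a ω ≤ M * μ a

/-- The LP objective. -/
noncomputable def LPobj (μ : I.Profile → ℝ) (x : Fin I.n → I.Profile → I.Out → ℝ) : ℝ :=
  ∑ a : I.Profile, ∑ ω, I.F a ω * (μ a * I.r ω - ∑ i, x i a ω)

/-- The α-virtual social welfare. -/
noncomputable def Vsw (α : ℝ) : ℝ :=
  ⨆ a : I.Profile, ((∑ ω, I.F a ω * I.r ω) - α * I.cost a)

/-- Best responses to payment scheme `p` under α-virtual costs (single combinatorial agent). -/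
def BestResp (α : ℝ) (p : I.Out → ℝ) : Set I.Profile :=
  {a | ∀ a' : I.Profile,
    (∑ ω, I.F a' ω * p ω) - α * I.cost a' ≤ (∑ ω, I.F a ω * p ω) - α * I.cost a}

/-- Optimal principal utility in the single-agent problem with α-virtual costs. -/
noncomputable def OptS (α : ℝ) : ℝ :=
  sSup {u | ∃ (p : I.Out → ℝ) (a : I.Profile), (∀ ω, 0 ≤ p ω) ∧ a ∈ I.BestResp α p ∧
    u = ∑ ω, I.F a ω * (I.r ω - p ω)}

end PMA
lemma univ_profile : (Finset.univ : Finset (Fin 2 → Bool)) =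
    {![true,true], ![true,false], ![false,true], ![false,false]} := by decide

lemma sum_profile (f : (Fin 2 → Bool) → ℝ) :
    ∑ a, f a = f ![true,true] + f ![true,false] + f ![false,true] + f ![false,false] := by
  rw [univ_profile]
  rw [Finset.sum_insert (by decide), Finset.sum_insert (by decide),
    Finset.sum_insert (by decide), Finset.sum_singleton]
  ring

/-- success probability -/
noncomputable def q0 (a : Fin 2 → Bool) : ℝ :=
  if a 0 then (if a 1 then 1 else 1/2) else (if a 1 then 1/2 else 0)

lemma q0_nonneg (a : Fin 2 → Bool) : 0 ≤ q0 a := by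
  unfold q0; split <;> split <;> norm_num

lemma q0_le_one (a : Fin 2 → Bool) : q0 a ≤ 1 := by
  unfold q0; split <;> split <;> norm_num

noncomputable def I0 : PMA where
  n := 2
  npos := by norm_num
  Out := Bool
  fOut := inferInstance
  r := fun ω => if ω then 1 else 0
  r_nonneg := by intro ω; split <;> norm_num
  r_le_one := by intro ω; split <;> norm_num
  A := fun _ => Bool
  fA := fun _ => inferInstance
  neA := fun _ => inferInstance
  c := fun i a => if i = 0 ∧ a = true then 1/4 else 0
  c_nonneg := by intro i a; split <;> norm_num
  c_le_one := by intro i a; split <;> norm_num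
  c_zero := by intro i; exact ⟨false, by simp⟩
  F := fun a ω => if ω then q0 a else 1 - q0 a
  F_nonneg := by
    intro a ω; split
    · exact q0_nonneg a
    · linarith [q0_le_one a]
  F_sum_one := by intro a; rw [Fintype.sum_bool]; simp
lemma sum_profileI (f : I0.Profile → ℝ) :
    ∑ a, f a = f ![true,true] + f ![true,false] + f ![false,true] + f ![false,false] :=
  sum_profile f

lemma sum_outI (f : I0.Out → ℝ) : ∑ ω, f ω = f true + f false := Fintype.sum_bool f

lemma sum_fin2I (f : Fin I0.n → ℝ) : ∑ i, f i = f (0:Fin 2) + f (1:Fin 2) := Fin.sum_univ_two f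

lemma util_lt (μ : I0.Profile → ℝ) (π : Fin I0.n → I0.Profile → I0.Out → ℝ)
    (h : I0.RandIC μ π) : I0.randUtil μ π < 3/4 := by
  obtain ⟨⟨hμ0, hμ1⟩, hπ0, hic⟩ := h
  rw [sum_profileI] at hμ1
  have h1 := hic (0 : Fin 2) true false
  rw [sum_profileI, sum_profileI] at h1
  simp only [sum_outI] at h1
  simp only [sum_outI, I0, Matrix.cons_val_zero, Matrix.cons_val_one, Matrix.head_cons,
    Function.update, q0] at h1
  norm_num +decide at h1
  have hp : ∀ (i : Fin I0.n) (a : I0.Profile) (ω : I0.Out), 0 ≤ μ a * π i a ω :=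
    fun i a ω => mul_nonneg (hμ0 a) (hπ0 i a ω)
  unfold PMA.randUtil
  rw [sum_profileI]
  simp only [sum_outI, sum_fin2I]
  simp only [sum_outI, sum_fin2I, I0, Matrix.cons_val_zero, Matrix.cons_val_one,
    Matrix.head_cons, q0]
  norm_num
  rcases (hμ0 ![true,false]).eq_or_lt with he | he
  rotate_left
  · linarith [h1, hμ1, he, hμ0 ![true,true], hμ0 ![false,true], hμ0 ![false,false],
      hp (0:Fin 2) ![true,true] true, hp (0:Fin 2) ![true,true] false,
      hp (1:Fin 2) ![true,true] true, hp (1:Fin 2) ![true,true] false,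
      hp (0:Fin 2) ![true,false] true, hp (0:Fin 2) ![true,false] false,
      hp (1:Fin 2) ![true,false] true, hp (1:Fin 2) ![true,false] false,
      hp (0:Fin 2) ![false,true] true, hp (0:Fin 2) ![false,true] false,
      hp (1:Fin 2) ![false,true] true, hp (1:Fin 2) ![false,true] false,
      hp (0:Fin 2) ![false,false] true, hp (0:Fin 2) ![false,false] false,
      hp (1:Fin 2) ![false,false] true, hp (1:Fin 2) ![false,false] false]
  rcases (hμ0 ![false,true]).eq_or_lt with hg | hg
  rotate_left
  · linarith [h1, hμ1, hg, hμ0 ![true,true], hμ0 ![false,false],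
      hp (0:Fin 2) ![true,true] true, hp (0:Fin 2) ![true,true] false,
      hp (1:Fin 2) ![true,true] true, hp (1:Fin 2) ![true,true] false,
      hp (0:Fin 2) ![true,false] true, hp (0:Fin 2) ![true,false] false,
      hp (1:Fin 2) ![true,false] true, hp (1:Fin 2) ![true,false] false,
      hp (0:Fin 2) ![false,true] true, hp (0:Fin 2) ![false,true] false,
      hp (1:Fin 2) ![false,true] true, hp (1:Fin 2) ![false,true] false,
      hp (0:Fin 2) ![false,false] true, hp (0:Fin 2) ![false,false] false,
      hp (1:Fin 2) ![false,false] true, hp (1:Fin 2) ![false,false] false]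
  rcases (hμ0 ![false,false]).eq_or_lt with hh | hh
  rotate_left
  · linarith [h1, hμ1, hh, hμ0 ![true,true],
      hp (0:Fin 2) ![true,true] true, hp (0:Fin 2) ![true,true] false,
      hp (1:Fin 2) ![true,true] true, hp (1:Fin 2) ![true,true] false,
      hp (0:Fin 2) ![true,false] true, hp (0:Fin 2) ![true,false] false,
      hp (1:Fin 2) ![true,false] true, hp (1:Fin 2) ![true,false] false,
      hp (0:Fin 2) ![false,true] true, hp (0:Fin 2) ![false,true] false,
      hp (1:Fin 2) ![false,true] true, hp (1:Fin 2) ![false,true] false,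
      hp (0:Fin 2) ![false,false] true, hp (0:Fin 2) ![false,false] false,
      hp (1:Fin 2) ![false,false] true, hp (1:Fin 2) ![false,false] false]
  · -- e = g = h = 0, so μ![true,true] = 1
    rw [← he, ← hg, ← hh] at hμ1
    rw [← he] at h1
    rw [← he, ← hg, ← hh]
    have htt : μ ![true,true] = 1 := by linarith
    rw [htt] at h1 ⊢
    norm_num at h1 ⊢
    linarith [h1, hπ0 (0:Fin 2) ![true,true] false, hπ0 (1:Fin 2) ![true,true] true]
lemma feas (ε : ℝ) (hε : 0 < ε) (hε1 : ε ≤ 1) :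
    ∃ (μ : I0.Profile → ℝ) (π : Fin I0.n → I0.Profile → I0.Out → ℝ),
      I0.RandIC μ π ∧ I0.randUtil μ π = 3/4 - ε/2 := by
  have hεne : ε ≠ 0 := ne_of_gt hε
  refine ⟨fun a => if a (0:Fin 2) = true then (if a (1:Fin 2) = true then 1-ε else ε) else 0,
    fun i a ω => if i = (0:Fin 2) ∧ a (0:Fin 2) = true ∧ a (1:Fin 2) = false ∧ ω = true
      then 1/(2*ε) else 0, ⟨⟨?_, ?_⟩, ?_, ?_⟩, ?_⟩
  · intro a; dsimp only; split
    · split <;> linarith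
    · exact le_refl 0
  · rw [sum_profileI]
    simp [I0]
  · intro i a ω; dsimp only; split
    · positivity
    · exact le_refl 0
  · intro i ai ai'
    rcases i with ⟨iv, hiv⟩
    match iv, hiv with
    | 0, _ =>
      cases ai <;> cases ai' <;>
      · rw [show (⟨0, ‹_›⟩ : Fin I0.n) = (0 : Fin 2) from rfl]
        rw [sum_profileI, sum_profileI]
        simp only [sum_outI]
        simp only [sum_outI, I0, Matrix.cons_val_zero, Matrix.cons_val_one, Matrix.head_cons,
          Function.update, q0]
        norm_num +decide
        try field_simp
        try ring_nf
        try exact le_rfl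
        try nlinarith [hε, hε1, mul_inv_cancel₀ hεne,
          (by field_simp; ring : ε^2 * ε⁻¹ = ε)]
    | 1, _ =>
      cases ai <;> cases ai' <;>
      · rw [sum_profileI, sum_profileI]
        simp only [sum_outI]
        simp only [sum_outI, I0, Matrix.cons_val_zero, Matrix.cons_val_one, Matrix.head_cons,
          Function.update, q0]
        norm_num
        try field_simp
        try ring_nf
        try nlinarith [hε, hε1]
  · unfold PMA.randUtil
    rw [sum_profileI]
    simp only [sum_outI, sum_fin2I]
    simp only [sum_outI, sum_fin2I, I0, Matrix.cons_val_zero, Matrix.cons_val_one,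
      Matrix.head_cons, q0]
    norm_num
    field_simp
    ring
lemma optR_eq : I0.OptR = 3/4 := by
  have hub : ∀ u ∈ {u | ∃ μ π, I0.RandIC μ π ∧ u = I0.randUtil μ π}, u ≤ 3/4 := by
    rintro u ⟨μ, π, hIC, rfl⟩
    exact (util_lt μ π hIC).le
  have hbdd : BddAbove {u | ∃ μ π, I0.RandIC μ π ∧ u = I0.randUtil μ π} := ⟨3/4, hub⟩
  obtain ⟨μ1, π1, h1, he1⟩ := feas 1 one_pos le_rfl
  have hne : {u | ∃ μ π, I0.RandIC μ π ∧ u = I0.randUtil μ π}.Nonempty :=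
    ⟨I0.randUtil μ1 π1, μ1, π1, h1, rfl⟩
  refine le_antisymm (csSup_le hne hub) ?_
  refine le_of_forall_pos_le_add ?_
  intro δ hδ
  obtain ⟨μ, π, hIC, heq⟩ := feas (min 1 δ) (lt_min one_pos hδ) (min_le_left _ _)
  have hmem : 3/4 - (min 1 δ)/2 ∈ {u | ∃ μ π, I0.RandIC μ π ∧ u = I0.randUtil μ π} :=
    ⟨μ, π, hIC, heq.symm⟩
  have := le_csSup hbdd hmem
  have : min 1 δ ≤ δ := min_le_right _ _
  unfold PMA.OptR
  linarith [le_csSup hbdd hmem]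

/-- There exists an instance in which the supremum `Opt_R` over IC
randomized contracts is not attained: every IC randomized contract has utility strictly
below `Opt_R`. In the witnessing instance `Opt_R = 3/4`, for every `ε ∈ (0,1]` there is an
IC randomized contract with utility at least `3/4 - ε`, and every IC randomized contract has
utility at most `1/2` or strictly below `3/4`. -/
theorem supremum_not_attained :
    ∃ I : PMA,
      (∀ (μ : I.Profile → ℝ) (π : Fin I.n → I.Profile → I.Out → ℝ),
        I.RandIC μ π → I.randUtil μ π < I.OptR) ∧
      I.OptR = 3 / 4 ∧
      (∀ ε : ℝ, 0 < ε → ε ≤ 1 →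
        ∃ (μ : I.Profile → ℝ) (π : Fin I.n → I.Profile → I.Out → ℝ),
          I.RandIC μ π ∧ 3 / 4 - ε ≤ I.randUtil μ π) ∧
      (∀ (μ : I.Profile → ℝ) (π : Fin I.n → I.Profile → I.Out → ℝ),
        I.RandIC μ π → I.randUtil μ π ≤ 1 / 2 ∨ I.randUtil μ π < 3 / 4) := by
  refine ⟨I0, ?_, optR_eq, ?_, ?_⟩
  · intro μ π h
    rw [optR_eq]
    exact util_lt μ π h
  · intro ε h0 h1
    obtain ⟨μ, π, hIC, heq⟩ := feas ε h0 h1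
    exact ⟨μ, π, hIC, by rw [heq]; linarith⟩
  · intro μ π h
    exact Or.inr (util_lt μ π h)
end

section
/- For every α > 0 and every ε > 0 there exists a principal-multi-agent instance with n agents such that Opt_S^{n^{1−α}} ≥ 1/2 while Opt_D ≤ ε/2; in particular Opt_D / Opt_S^{n^{1−α}} ≤ ε. Hence the n-fold increase of virtual costs in the reduction from multi-agent to single-agent contract design is tight: for any sublinear virtual-cost factor n^{1−α}, the optimal deterministic multi-agent utility can be an arbitrarily small fraction of the corresponding virtual single-agent utility. -/
open scoped Classical BigOperators

noncomputable def gfun (n : ℕ) (a : Fin n → Bool) : ℝ := ∑ i, (if a i then (1:ℝ) else 0)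

lemma gfun_nonneg (n : ℕ) (a : Fin n → Bool) : 0 ≤ gfun n a :=
  Finset.sum_nonneg fun i _ => by split <;> norm_num

lemma gfun_le (n : ℕ) (a : Fin n → Bool) : gfun n a ≤ n := by
  have h : gfun n a ≤ ∑ _i : Fin n, (1:ℝ) :=
    Finset.sum_le_sum fun i _ => by split <;> norm_num
  simpa using h

lemma gfun_update (n : ℕ) (a : Fin n → Bool) (i : Fin n) (b : Bool) :
    gfun n (Function.update a i b) =
      gfun n a - (if a i then 1 else 0) + (if b then 1 else 0) := by
  unfold gfun
  rw [← Finset.add_sum_erase _ (fun j => if Function.update a i b j then (1:ℝ) else 0)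
      (Finset.mem_univ i),
    ← Finset.add_sum_erase _ (fun j => if a j then (1:ℝ) else 0) (Finset.mem_univ i),
    Finset.sum_congr rfl fun j hj =>
      by rw [Function.update_of_ne (Finset.ne_of_mem_erase hj)]]
  simp only [Function.update_self]
  ring

lemma gfun_true (n : ℕ) : gfun n (fun _ => true) = n := by simp [gfun]

noncomputable def myPMA (n : ℕ) (hn : 0 < n) (cval : ℝ) (hc0 : 0 ≤ cval) (hc1 : cval ≤ 1) :
    PMA where
  n := n
  npos := hn
  Out := Bool
  fOut := inferInstance
  r := fun ω => if ω then 1 else 0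
  r_nonneg := fun ω => by cases ω <;> norm_num
  r_le_one := fun ω => by cases ω <;> norm_num
  A := fun _ => Bool
  fA := fun _ => inferInstance
  neA := fun _ => inferInstance
  c := fun _ b => if b then cval else 0
  c_nonneg := fun i b => by split <;> simp [hc0]
  c_le_one := fun i b => by split <;> norm_num [hc1]
  c_zero := fun i => ⟨false, by simp⟩
  F := fun a ω => if ω then gfun n a / n else 1 - gfun n a / n
  F_nonneg := fun a ω => by
    have h0 := gfun_nonneg n a
    have h1 := gfun_le n a
    have hn' : (0:ℝ) < n := by exact_mod_cast hn
    split
    · positivity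
    · have : gfun n a / n ≤ 1 := by rw [div_le_one hn']; exact h1
      linarith
  F_sum_one := fun a => by
    rw [Fintype.sum_bool]
    norm_num

lemma pay_sum (n : ℕ) (hn : 0 < n) (cval : ℝ) (hc0 : 0 ≤ cval) (hc1 : cval ≤ 1)
    (a : Fin n → Bool) (q : Bool → ℝ) :
    (∑ ω, (myPMA n hn cval hc0 hc1).F a ω * q ω)
      = (gfun n a / n) * q true + (1 - gfun n a / n) * q false := by
  show ∑ ω : Bool, _ = _
  rw [Fintype.sum_bool]
  simp [myPMA]

lemma cost_eq (n : ℕ) (hn : 0 < n) (cval : ℝ) (hc0 : 0 ≤ cval) (hc1 : cval ≤ 1)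
    (a : Fin n → Bool) :
    (myPMA n hn cval hc0 hc1).cost a = cval * gfun n a := by
  show ∑ i : Fin n, (if a i then cval else 0) = _
  unfold gfun
  rw [Finset.mul_sum]
  refine Finset.sum_congr rfl fun i _ => ?_
  cases a i <;> simp

lemma util_le_one (I : PMA) (a : I.Profile) (q : I.Out → ℝ) (hq : ∀ ω, 0 ≤ q ω) :
    ∑ ω, I.F a ω * (I.r ω - q ω) ≤ 1 := by
  have h1 : ∑ ω, I.F a ω * (I.r ω - q ω) ≤ ∑ ω, I.F a ω * 1 :=
    Finset.sum_le_sum fun ω _ => mul_le_mul_of_nonneg_left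
      (by have := I.r_le_one ω; have := hq ω; linarith) (I.F_nonneg a ω)
  simpa [I.F_sum_one a] using h1

set_option maxHeartbeats 1600000 in
/-- For every `α > 0` and `ε > 0` there exists an instance with `n` agents
such that `Opt_S^{n^{1-α}} ≥ 1/2` while `Opt_D ≤ ε/2`; in particular
`Opt_D / Opt_S^{n^{1-α}} ≤ ε`, so the `n`-factor in the virtual-cost reduction is tight. -/
theorem virtual_cost_factor_tight (α ε : ℝ) (hα : 0 < α) (hε : 0 < ε) :
    ∃ I : PMA,
      (1 : ℝ) / 2 ≤ I.OptS ((I.n : ℝ) ^ ((1 : ℝ) - α)) ∧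
      I.OptD ≤ ε / 2 ∧
      I.OptD / I.OptS ((I.n : ℝ) ^ ((1 : ℝ) - α)) ≤ ε := by
  set n : ℕ := ⌈(ε⁻¹) ^ (α⁻¹)⌉₊ + ⌈ε⁻¹⌉₊ + 1 with hn_def
  have hn : 0 < n := Nat.succ_pos _
  set ν : ℝ := (n : ℝ) with hν_def
  have hν1 : (1:ℝ) ≤ ν := by
    rw [hν_def]; exact_mod_cast hn
  have hν0 : (0:ℝ) < ν := by linarith
  have hνε : ε⁻¹ ≤ ν := by
    have h1 : (ε⁻¹ : ℝ) ≤ (⌈ε⁻¹⌉₊ : ℝ) := Nat.le_ceil _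
    have h2 : ((⌈ε⁻¹⌉₊ : ℕ) : ℝ) ≤ ν := by
      rw [hν_def, hn_def]; push_cast; linarith [(Nat.cast_nonneg ⌈(ε⁻¹) ^ (α⁻¹)⌉₊ : (0:ℝ) ≤ _)]
    linarith
  have hνα : ε⁻¹ ≤ ν ^ α := by
    have hb : (ε⁻¹ : ℝ) ^ (α⁻¹) ≤ ν := by
      have h1 : ((ε⁻¹ : ℝ) ^ (α⁻¹)) ≤ (⌈(ε⁻¹) ^ (α⁻¹)⌉₊ : ℝ) := Nat.le_ceil _
      have h2 : ((⌈(ε⁻¹) ^ (α⁻¹)⌉₊ : ℕ) : ℝ) ≤ ν := by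
        rw [hν_def, hn_def]; push_cast; linarith [(Nat.cast_nonneg ⌈ε⁻¹⌉₊ : (0:ℝ) ≤ _)]
      linarith
    have h3 := Real.rpow_le_rpow (Real.rpow_nonneg (by positivity) _) hb hα.le
    rwa [← Real.rpow_mul (by positivity), inv_mul_cancel₀ hα.ne', Real.rpow_one] at h3
  set cval : ℝ := min (ν ^ (α - 2) / 2) 1 with hcval_def
  have hrp : (0:ℝ) < ν ^ (α - 2) := Real.rpow_pos_of_pos hν0 _
  have hcpos : 0 < cval := lt_min (by linarith) one_pos
  have hc0 : 0 ≤ cval := hcpos.le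
  have hc1 : cval ≤ 1 := min_le_right _ _
  have hkey : 1 / (2 * ε) ≤ ν * ν * cval := by
    have hν2 : ν * ν = ν ^ ((2:ℝ)) := by
      rw [show ((2:ℝ)) = ((2:ℕ):ℝ) by norm_num, Real.rpow_natCast]; ring
    rcases le_total (ν ^ (α - 2) / 2) 1 with h | h
    · have hce : cval = ν ^ (α - 2) / 2 := min_eq_left h
      have heq : ν * ν * (ν ^ (α - 2) / 2) = ν ^ α / 2 := by
        rw [hν2, show ν ^ ((2:ℝ)) * (ν ^ (α - 2) / 2) = (ν ^ ((2:ℝ)) * ν ^ (α - 2))/2 by ring,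
          ← Real.rpow_add hν0, show (2:ℝ) + (α - 2) = α by ring]
      rw [hce, heq]
      have : 1 / (2*ε) = ε⁻¹ / 2 := by field_simp
      rw [this]
      linarith
    · have hce : cval = 1 := min_eq_right h
      rw [hce]
      have h1 : 1/(2*ε) ≤ ε⁻¹ := by
        rw [div_le_iff₀ (by positivity)]
        field_simp
        norm_num
      nlinarith
  set tval : ℝ := ν ^ ((2:ℝ) - α) * cval with htval_def
  have hrp2 : (0:ℝ) ≤ ν ^ ((2:ℝ) - α) := (Real.rpow_pos_of_pos hν0 _).le
  have ht0 : 0 ≤ tval := mul_nonneg hrp2 hc0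
  have ht2 : tval ≤ 1/2 := by
    have h1 : tval ≤ ν ^ ((2:ℝ) - α) * (ν ^ (α - 2) / 2) :=
      mul_le_mul_of_nonneg_left (min_le_left _ _) hrp2
    have h2 : ν ^ ((2:ℝ) - α) * (ν ^ (α - 2) / 2) = 1/2 := by
      rw [show ν ^ ((2:ℝ) - α) * (ν ^ (α - 2) / 2) = (ν ^ ((2:ℝ) - α) * ν ^ (α - 2))/2 by ring,
        ← Real.rpow_add hν0, show (2:ℝ) - α + (α - 2) = 0 by ring, Real.rpow_zero]
    linarith
  have htα : tval = ν ^ ((1:ℝ) - α) * cval * ν := by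
    rw [htval_def, show ((2:ℝ) - α) = (1 - α) + 1 by ring, Real.rpow_add hν0, Real.rpow_one]
    ring

  have hνne : ((n:ℕ):ℝ) ≠ 0 := Nat.cast_ne_zero.mpr hn.ne'
  -- abbreviation
  have hnn : (((myPMA n hn cval hc0 hc1).n : ℕ) : ℝ) = ν := rfl
  -- Part 1 : OptS ≥ 1/2
  have hOptS : 1/2 ≤ (myPMA n hn cval hc0 hc1).OptS (ν ^ ((1:ℝ) - α)) := by
    rw [PMA.OptS]
    have hbdd : BddAbove {u | ∃ (p : (myPMA n hn cval hc0 hc1).Out → ℝ)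
        (a : (myPMA n hn cval hc0 hc1).Profile), (∀ ω, 0 ≤ p ω) ∧
        a ∈ (myPMA n hn cval hc0 hc1).BestResp (ν ^ ((1:ℝ) - α)) p ∧
        u = ∑ ω, (myPMA n hn cval hc0 hc1).F a ω * ((myPMA n hn cval hc0 hc1).r ω - p ω)} := by
      refine ⟨1, ?_⟩
      rintro x ⟨p, a, hp, -, rfl⟩
      exact util_le_one _ a p hp
    have hval : ∀ a : Fin n → Bool,
        (∑ ω, (myPMA n hn cval hc0 hc1).F a ω *
          (fun ω : Bool => if ω then tval else 0) ω)
          - (ν ^ ((1:ℝ) - α)) * (myPMA n hn cval hc0 hc1).cost a = 0 := by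
      intro a
      rw [pay_sum, cost_eq, htα]
      norm_num
      field_simp
      ring
    have hmem : (1 - tval) ∈ {u | ∃ (p : (myPMA n hn cval hc0 hc1).Out → ℝ)
        (a : (myPMA n hn cval hc0 hc1).Profile), (∀ ω, 0 ≤ p ω) ∧
        a ∈ (myPMA n hn cval hc0 hc1).BestResp (ν ^ ((1:ℝ) - α)) p ∧
        u = ∑ ω, (myPMA n hn cval hc0 hc1).F a ω * ((myPMA n hn cval hc0 hc1).r ω - p ω)} := by
      refine ⟨fun ω : Bool => if ω then tval else 0, fun _ => true, ?_, ?_, ?_⟩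
      · intro ω
        dsimp only
        split <;> simp [ht0]
      · intro a'
        exact le_of_eq ((hval a').trans (hval (fun _ => true)).symm)
      · have hr1 : (myPMA n hn cval hc0 hc1).r true = 1 := by simp [myPMA]
        have hr0 : (myPMA n hn cval hc0 hc1).r false = 0 := by simp [myPMA]
        have heq : (1:ℝ) - tval =
            ∑ ω, (myPMA n hn cval hc0 hc1).F (fun _ : Fin n => true) ω *
              ((myPMA n hn cval hc0 hc1).r ω - (fun ω : Bool => if ω then tval else 0) ω) := by
          erw [pay_sum n hn cval hc0 hc1 (fun _ => true), gfun_true, hr1, hr0, div_self hνne]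
          norm_num
        exact heq
    have h12 : (1:ℝ)/2 ≤ 1 - tval := by linarith
    exact le_trans h12 (le_csSup hbdd hmem)
  -- Part 2 : OptD ≤ ε/2
  have hOptD : (myPMA n hn cval hc0 hc1).OptD ≤ ε/2 := by
    rw [PMA.OptD]
    have hne : {u | ∃ a p, (myPMA n hn cval hc0 hc1).DetIC a p ∧
        u = (myPMA n hn cval hc0 hc1).detUtil a p}.Nonempty := by
      refine ⟨_, fun _ => false, fun _ _ => 0, ⟨fun _ _ => le_refl 0, ?_⟩, rfl⟩
      intro i ai'
      have h1 := (myPMA n hn cval hc0 hc1).c_nonneg i ai'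
      have h2 : (myPMA n hn cval hc0 hc1).c i ((fun _ : Fin n => false) i) = 0 := by
        simp [myPMA]
      simp only [mul_zero, Finset.sum_const_zero, h2]
      linarith
    refine csSup_le hne ?_
    rintro u ⟨a, p, ⟨hp, hIC⟩, rfl⟩
    erw [PMA.detUtil, pay_sum n hn cval hc0 hc1 a]
    have hg0 : 0 ≤ gfun n a := gfun_nonneg n a
    have hgn : gfun n a ≤ ν := gfun_le n a
    have hT0 : 0 ≤ ∑ i, p i false := Finset.sum_nonneg fun i _ => hp i false
    have hpay : ∀ i : Fin n, a i = true → ν * cval ≤ p i true := by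
      intro i hi
      have h := hIC i false
      erw [pay_sum n hn cval hc0 hc1 a, pay_sum n hn cval hc0 hc1 (Function.update a i false), gfun_update] at h
      have hc : (myPMA n hn cval hc0 hc1).c i (a i) = cval := by simp [myPMA, hi]
      have hc' : (myPMA n hn cval hc0 hc1).c i false = 0 := by simp [myPMA]
      rw [hc, hc', hi] at h
      norm_num at h
      have hpf := hp i false
      have hn0 : (0:ℝ) < ↑n := hν0
      rw [hν_def]
      field_simp at h
      linarith [hpf, h]
    have hS : ν * cval * gfun n a ≤ ∑ i, p i true := by
      have h1 : ∑ i : Fin n, (if a i = true then ν * cval else 0) ≤ ∑ i, p i true := by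
        refine Finset.sum_le_sum fun i _ => ?_
        rcases Bool.dichotomy (a i) with hi | hi
        · simpa [hi] using hp i true
        · exact (if_pos hi).trans_le (hpay i hi)
      have h2 : ∑ i : Fin n, (if a i = true then ν * cval else 0) = ν * cval * gfun n a := by
        unfold gfun
        rw [Finset.mul_sum]
        exact Finset.sum_congr rfl fun i _ => by
          rcases Bool.dichotomy (a i) with h | h <;> rw [h] <;> simp <;> exact fun h' => absurd rfl h'
      linarith
    have hr1 : (myPMA n hn cval hc0 hc1).r true = 1 := by simp [myPMA]
    have hr0 : (myPMA n hn cval hc0 hc1).r false = 0 := by simp [myPMA]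
    rw [hr1, hr0]
    set g := gfun n a with hg_def
    set S := ∑ i, p i true with hS_def
    set T := ∑ i, p i false with hT_def
    have hstep1 : (1 - g / ↑n) * (0 - T) ≤ 0 := by
      apply mul_nonpos_of_nonneg_of_nonpos
      · have : g / ν ≤ 1 := by rw [div_le_one hν0]; exact hgn
        show 0 ≤ 1 - g / ↑n
        linarith
      · linarith
    have hstep2 : g / ↑n * (1 - S) ≤ g / ν * (1 - ν * cval * g) := by
      show g / ν * (1 - S) ≤ _
      apply mul_le_mul_of_nonneg_left _ (by positivity)
      linarith
    have hkey' : 1 ≤ ν * ν * cval * (2 * ε) := by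
      rw [div_le_iff₀ (by positivity)] at hkey
      linarith
    have hstep3 : g / ν * (1 - ν * cval * g) ≤ ε / 2 := by
      rw [div_mul_eq_mul_div, div_le_iff₀ hν0]
      nlinarith [sq_nonneg (2*g*ν*cval - 1), hkey', mul_pos hν0 hcpos, hε, hg0]
    linarith
  have hpos : 0 < (myPMA n hn cval hc0 hc1).OptS (ν ^ ((1:ℝ) - α)) :=
    lt_of_lt_of_le one_half_pos hOptS
  refine ⟨myPMA n hn cval hc0 hc1, ?_, hOptD, ?_⟩
  · rw [hnn]; exact hOptS
  · rw [hnn, div_le_iff₀ hpos]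
    have := mul_le_mul_of_nonneg_left hOptS hε.le
    nlinarith [hpos]
end
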